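/- arXiv:2509.03824 — 5 statements merged into one kernel-verified Lean document; each statement's English description precedes it below -/
import Mathlib

section
/- Fix T > 0, m > 0 and c > 0, and let h : [0, T) → ℝ be continuous with h_t ≥ c/(T−t) for all t ∈ [0, T). Define H_t = ∫₀ᵗ h_s ds and z_t = (h_t / h_0) · exp(−H_t/(m+1)). Then for every t ∈ [0, T), z is integrable on [t, T) (as an improper integral) and the identity h_t · ∫ₜᵀ z_s ds = (m+1) · z_t holds. -/
open Real MeasureTheory Set Filter
open scoped Topology

/-!
Since `h ≥ c/(T-t)`, `H_t ≥ c·log(T/(T-t))` blows up at `T⁻`, so the antiderivative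
`F = -((m+1)/h_0)·exp(-H/(m+1))` of `z` tends to `0` there. As `z ≥ 0`, the fundamental theorem
of calculus on `[t, T)` gives integrability and `∫ₜᵀ z = -F_t = (m+1)/h_0 · exp(-H_t/(m+1))`,
which is `(m+1)·z_t / h_t`.
-/

section Primitive

variable {h : ℝ → ℝ} {a T : ℝ}

theorem ContinuousOn.intervalIntegrable_of_Ico (hh : ContinuousOn h (Ico a T)) {s : ℝ}
    (hs : s ∈ Ico a T) : IntervalIntegrable h volume a s := by
  refine (hh.mono ?_).intervalIntegrable
  rw [uIcc_of_le hs.1]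
  exact Icc_subset_Ico_right hs.2

theorem ContinuousOn.hasDerivAt_integral_of_Ico (hh : ContinuousOn h (Ico a T)) {x : ℝ}
    (hx : x ∈ Ioo a T) : HasDerivAt (fun u => ∫ s in a..u, h s) (h x) x :=
  have hh' : ContinuousOn h (Ioo a T) := hh.mono Ioo_subset_Ico_self
  intervalIntegral.integral_hasDerivAt_right (hh.intervalIntegrable_of_Ico (Ioo_subset_Ico_self hx))
    (hh'.stronglyMeasurableAtFilter isOpen_Ioo x hx) (hh'.continuousAt (isOpen_Ioo.mem_nhds hx))

theorem ContinuousOn.continuousOn_integral_of_Ico (hh : ContinuousOn h (Ico a T)) :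
    ContinuousOn (fun u => ∫ s in a..u, h s) (Ico a T) := by
  intro x hx
  obtain ⟨b, hxb, hbT⟩ := exists_between hx.2
  have hab : a ≤ b := hx.1.trans hxb.le
  have hcont : ContinuousOn (fun u => ∫ s in a..u, h s) (Icc a b) := by
    simpa only [uIcc_of_le hab] using intervalIntegral.continuousOn_primitive_interval'
      (hh.intervalIntegrable_of_Ico ⟨hab, hbT⟩) left_mem_uIcc
  refine (hcont x ⟨hx.1, hxb.le⟩).mono_of_mem_nhdsWithin ?_
  filter_upwards [nhdsWithin_le_nhds (Iio_mem_nhds hxb), self_mem_nhdsWithin] with y hyb hy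
  exact ⟨hy.1, le_of_lt hyb⟩

end Primitive

theorem integral_div_sub_eq_log {a s T c : ℝ} (hs : s < T) (has : a ≤ s) :
    ∫ u in a..s, c / (T - u) = c * log ((T - a) / (T - s)) := by
  simp only [div_eq_mul_inv c, intervalIntegral.integral_const_mul,
    intervalIntegral.integral_comp_sub_left (fun x => x⁻¹) T]
  rw [integral_inv_of_pos (by linarith) (by linarith)]

theorem tendsto_integral_atTop_of_div_sub_le {h : ℝ → ℝ} {a T c : ℝ} (haT : a < T)
    (hc : 0 < c)
    (hint : ∀ s ∈ Ico a T, IntervalIntegrable h volume a s)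
    (hlb : ∀ s ∈ Ico a T, c / (T - s) ≤ h s) :
    Tendsto (fun s => ∫ u in a..s, h u) (𝓝[<] T) atTop := by
  have hgap : Tendsto (fun s => T - s) (𝓝[<] T) (𝓝[>] 0) := by
    refine tendsto_nhdsWithin_iff.2
      ⟨?_, eventually_nhdsWithin_of_forall fun s hs => sub_pos.2 (mem_Iio.1 hs)⟩
    simpa using ((continuous_sub_left T).tendsto T).mono_left nhdsWithin_le_nhds
  have hlog : Tendsto (fun s => c * log ((T - a) / (T - s))) (𝓝[<] T) atTop := by
    simp only [div_eq_mul_inv (T - a)]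
    exact ((tendsto_log_atTop.comp ((tendsto_inv_nhdsGT_zero.comp hgap).const_mul_atTop
      (sub_pos.2 haT))).const_mul_atTop hc)
  refine tendsto_atTop_mono' _ ?_ hlog
  filter_upwards [Ico_mem_nhdsLT haT] with s hs
  rw [← integral_div_sub_eq_log hs.2 hs.1]
  refine intervalIntegral.integral_mono_on hs.1 ?_ (hint s hs) fun u hu =>
    hlb u ⟨hu.1, hu.2.trans_lt hs.2⟩
  refine ContinuousOn.intervalIntegrable fun u hu => ?_
  rw [uIcc_of_le hs.1] at hu
  exact (continuousAt_const.div (continuousAt_const.sub continuousAt_id)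
    (sub_pos.2 (hu.2.trans_lt hs.2)).ne').continuousWithinAt

theorem integrableOn_Ioo_and_integral_eq_of_tendsto {f F : ℝ → ℝ} {a b L : ℝ} (hab : a < b)
    (hF : ContinuousOn F (Ico a b)) (hderiv : ∀ x ∈ Ioo a b, HasDerivAt F (f x) x)
    (hf : ∀ x ∈ Ioo a b, 0 ≤ f x) (hb : Tendsto F (𝓝[<] b) (𝓝 L)) :
    IntegrableOn f (Ioo a b) ∧ ∫ x in Ioo a b, f x = L - F a := by
  have ha : Tendsto F (𝓝[>] a) (𝓝 (F a)) :=
    ((hF a (left_mem_Ico.2 hab)).mono_of_mem_nhdsWithin (Ico_mem_nhdsGE hab)).tendsto.mono_left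
      (nhdsWithin_mono _ Ioi_subset_Ici_self)
  set G := extendFrom (Ioo a b) F
  have hGF : ∀ x ∈ Ioo a b, G x = F x := extendFrom_extends (hF.mono Ioo_subset_Ico_self)
  have hGcont : ContinuousOn G (Icc a b) :=
    continuousOn_Icc_extendFrom_Ioo (hF.mono Ioo_subset_Ico_self) ha hb
  have hGderiv : ∀ x ∈ Ioo a b, HasDerivAt G (f x) x := fun x hx =>
    (hderiv x hx).congr_of_eventuallyEq
      (eventually_of_mem (isOpen_Ioo.mem_nhds hx) hGF)
  have hint : IntegrableOn f (Ioc a b) :=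
    intervalIntegral.integrableOn_deriv_of_nonneg hGcont hGderiv hf
  refine ⟨hint.mono_set Ioo_subset_Ioc_self, ?_⟩
  rw [← integral_Ioc_eq_integral_Ioo, ← intervalIntegral.integral_of_le hab.le,
    intervalIntegral.integral_eq_sub_of_hasDerivAt_of_le hab.le hGcont hGderiv
      ((intervalIntegrable_iff_integrableOn_Ioc_of_le hab.le).2 hint)]
  exact congrArg₂ (· - ·) (eq_lim_at_right_extendFrom_Ioo hab hb)
    (eq_lim_at_left_extendFrom_Ioo hab ha)

theorem stmt_5_general (T m c : ℝ) (hm : 0 < m) (hc : 0 < c)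
    (h : ℝ → ℝ) (hcont : ContinuousOn h (Ico 0 T))
    (hlb : ∀ t ∈ Ico (0 : ℝ) T, c / (T - t) ≤ h t)
    (H : ℝ → ℝ) (hH : ∀ t : ℝ, H t = ∫ s in (0 : ℝ)..t, h s)
    (z : ℝ → ℝ) (hz : ∀ t : ℝ, z t = (h t / h 0) * Real.exp (-H t / (m + 1))) :
    ∀ t ∈ Ico (0 : ℝ) T,
      IntegrableOn z (Ioo t T) ∧ h t * ∫ s in Ioo t T, z s = (m + 1) * z t := by
  intro t ht
  have hT : 0 < T := ht.1.trans_lt ht.2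
  have hm1 : 0 < m + 1 := by linarith
  have hpos : ∀ s ∈ Ico 0 T, 0 < h s := fun s hs =>
    (div_pos hc (sub_pos.2 hs.2)).trans_le (hlb s hs)
  have h0 : 0 < h 0 := hpos 0 (left_mem_Ico.2 hT)
  have hH' : H = fun u => ∫ s in (0 : ℝ)..u, h s := funext hH
  -- `F` is the antiderivative of `z` that vanishes at `T⁻`, since `H → ∞` there.
  set F : ℝ → ℝ := fun s => -((m + 1) / h 0) * exp (-H s / (m + 1))
  have hFcont : ContinuousOn F (Ico t T) := by
    refine continuousOn_const.mul ((ContinuousOn.div_const ?_ _).rexp)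
    exact (hH' ▸ hcont.continuousOn_integral_of_Ico).neg.mono (Ico_subset_Ico_left ht.1)
  have hFderiv : ∀ x ∈ Ioo t T, HasDerivAt F (z x) x := fun x hx => by
    have hHx : HasDerivAt H (h x) x :=
      hH' ▸ hcont.hasDerivAt_integral_of_Ico ⟨ht.1.trans_lt hx.1, hx.2⟩
    refine ((hHx.neg.div_const (m + 1)).exp.const_mul (-((m + 1) / h 0))).congr_deriv ?_
    rw [hz x, Pi.neg_apply]
    field_simp
  have hFlim : Tendsto F (𝓝[<] T) (𝓝 0) := by
    have hHtop : Tendsto H (𝓝[<] T) atTop := hH' ▸ tendsto_integral_atTop_of_div_sub_le hT hc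
      (fun _ => hcont.intervalIntegrable_of_Ico) hlb
    rw [← mul_zero (-((m + 1) / h 0))]
    exact (tendsto_exp_atBot.comp ((tendsto_neg_atTop_atBot.comp hHtop).atBot_div_const
      hm1)).const_mul (-((m + 1) / h 0))
  obtain ⟨hint, hval⟩ := integrableOn_Ioo_and_integral_eq_of_tendsto ht.2 hFcont hFderiv
    (fun x hx => by
      rw [hz x]
      have := hpos x ⟨ht.1.trans hx.1.le, hx.2⟩
      positivity)
    hFlim
  refine ⟨hint, ?_⟩
  rw [hval, hz t, zero_sub]
  simp only [F]
  field_simp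

/-- For a continuous reversion rate `h` on `[0,T)` with the blow-up lower bound
`h_t ≥ c/(T−t)`, the function `z_t = (h_t/h_0)·exp(−H_t/(m+1))` with `H_t = ∫₀ᵗ h_s ds`
is integrable on `[t,T)` and satisfies `h_t · ∫ₜᵀ z_s ds = (m+1)·z_t`. -/
theorem stmt_5 (T m c : ℝ) (hT : 0 < T) (hm : 0 < m) (hc : 0 < c)
    (h : ℝ → ℝ) (hcont : ContinuousOn h (Ico 0 T))
    (hlb : ∀ t ∈ Ico (0 : ℝ) T, c / (T - t) ≤ h t)
    (H : ℝ → ℝ) (hH : ∀ t : ℝ, H t = ∫ s in (0 : ℝ)..t, h s)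
    (z : ℝ → ℝ) (hz : ∀ t : ℝ, z t = (h t / h 0) * Real.exp (-H t / (m + 1))) :
    ∀ t ∈ Ico (0 : ℝ) T,
      IntegrableOn z (Ioo t T) ∧ h t * ∫ s in Ioo t T, z s = (m + 1) * z t :=
  stmt_5_general T m c hm hc h hcont hlb H hH z hz
end

section
/- Fix m > 0 and real numbers t < T, and let I : [t, T] → ℝ be continuous with I_q > 0 for all q ∈ [t, T) and ∫ₜᵀ I_q^(−m) dq < ∞ (as an improper integral). Then lim_{η → 0⁺} ∫ₜᵀ η^(1/m) / (η^(1/m) + I_q)^(m+1) dq = 0. -/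
/-!
For `ε > 0` the integrand `ε / (ε + I) ^ (m + 1)` is at most `ε / (ε * I ^ m) = I ^ (-m)` and
tends to `0` pointwise where `I > 0`, so dominated convergence applies with `ε = η ^ (1 / m)`.
-/

open Real MeasureTheory Set Filter Topology

namespace Real

theorem div_add_rpow_succ_le_rpow_neg {m ε x : ℝ} (hm : 0 ≤ m) (hε : 0 < ε) (hx : 0 < x) :
    ε / (ε + x) ^ (m + 1) ≤ x ^ (-m) := by
  have hεx : 0 < ε + x := by linarith
  have hden : ε * x ^ m ≤ (ε + x) ^ (m + 1) := by
    rw [rpow_add hεx, rpow_one, mul_comm]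
    gcongr <;> linarith
  calc ε / (ε + x) ^ (m + 1) ≤ ε / (ε * x ^ m) := by gcongr
    _ = x ^ (-m) := by rw [rpow_neg hx.le]; field_simp

theorem tendsto_div_add_rpow_nhdsGT_zero {c : ℝ} (hc : 0 < c) (p : ℝ) :
    Tendsto (fun ε : ℝ => ε / (ε + c) ^ p) (𝓝[>] 0) (𝓝 0) := by
  have hcont : ContinuousAt (fun ε : ℝ => ε / (ε + c) ^ p) 0 := by
    refine continuousAt_id.div ((continuousAt_rpow_const _ p (Or.inl ?_)).comp
      (continuousAt_id.add continuousAt_const)) ?_ <;> simp [hc.ne', (rpow_pos_of_pos hc p).ne']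
  simpa using hcont.tendsto.mono_left nhdsWithin_le_nhds

theorem tendsto_rpow_nhdsGT_zero {r : ℝ} (hr : 0 < r) :
    Tendsto (fun η : ℝ => η ^ r) (𝓝[>] 0) (𝓝[>] 0) := by
  refine tendsto_nhdsWithin_iff.2 ⟨?_, ?_⟩
  · simpa [zero_rpow hr.ne'] using
      (continuousAt_rpow_const 0 r (Or.inr hr.le)).tendsto.mono_left nhdsWithin_le_nhds
  · filter_upwards [self_mem_nhdsWithin] with η hη using rpow_pos_of_pos hη r

end Real

section

variable {α : Type*} [MeasurableSpace α] {μ : Measure α} {m : ℝ} {I : α → ℝ}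

theorem AEMeasurable.of_rpow_neg (hm : m ≠ 0) (hI_pos : ∀ᵐ x ∂μ, 0 < I x)
    (h : AEMeasurable (fun x => I x ^ (-m)) μ) : AEMeasurable I μ := by
  refine (h.pow_const (-m)⁻¹).congr ?_
  filter_upwards [hI_pos] with x hx
  rw [← rpow_mul hx.le, mul_inv_cancel₀ (neg_ne_zero.2 hm), rpow_one]

theorem tendsto_integral_div_add_rpow_succ (hm : 0 < m) (hI_pos : ∀ᵐ x ∂μ, 0 < I x)
    (hI_int : Integrable (fun x => I x ^ (-m)) μ) :
    Tendsto (fun ε : ℝ => ∫ x, ε / (ε + I x) ^ (m + 1) ∂μ) (𝓝[>] 0) (𝓝 0) := by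
  have hI_meas : AEMeasurable I μ := .of_rpow_neg hm.ne' hI_pos hI_int.aemeasurable
  have h_meas : ∀ ε : ℝ, AEStronglyMeasurable (fun x => ε / (ε + I x) ^ (m + 1)) μ := fun ε =>
    (aemeasurable_const.div ((aemeasurable_const.add hI_meas).pow_const _)).aestronglyMeasurable
  have h_bound : ∀ᶠ ε in 𝓝[>] 0, ∀ᵐ x ∂μ, ‖ε / (ε + I x) ^ (m + 1)‖ ≤ I x ^ (-m) := by
    filter_upwards [self_mem_nhdsWithin] with ε (hε : 0 < ε)
    filter_upwards [hI_pos] with x hx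
    rw [norm_of_nonneg (by positivity)]
    exact div_add_rpow_succ_le_rpow_neg hm.le hε hx
  have h_lim : ∀ᵐ x ∂μ, Tendsto (fun ε : ℝ => ε / (ε + I x) ^ (m + 1)) (𝓝[>] 0) (𝓝 0) := by
    filter_upwards [hI_pos] with x hx
    exact tendsto_div_add_rpow_nhdsGT_zero hx _
  simpa using tendsto_integral_filter_of_dominated_convergence _
    (Eventually.of_forall h_meas) h_bound hI_int h_lim

end

theorem stmt_12_general (m t T : ℝ) (hm : 0 < m)
    (I : ℝ → ℝ)
    (hI_pos : ∀ q ∈ Ico t T, 0 < I q)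
    (hI_int : IntegrableOn (fun q => I q ^ (-m)) (Ioo t T)) :
    Tendsto (fun η : ℝ => ∫ q in Ioo t T, η ^ (1 / m) / (η ^ (1 / m) + I q) ^ (m + 1))
      (nhdsWithin 0 (Ioi 0)) (nhds 0) := by
  have hI_pos_ae : ∀ᵐ q ∂volume.restrict (Ioo t T), 0 < I q :=
    ae_restrict_of_forall_mem measurableSet_Ioo fun q hq => hI_pos q (Ioo_subset_Ico_self hq)
  exact (tendsto_integral_div_add_rpow_succ hm hI_pos_ae hI_int).comp
    (tendsto_rpow_nhdsGT_zero (one_div_pos.2 hm))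

/-- For `m > 0`, `t < T`, and a continuous `I : [t,T] → ℝ`, strictly positive on `[t,T)`
with `∫ₜᵀ I_q^(−m) dq < ∞`, the penalty-term integral vanishes in the strong-penalization
limit: `∫ₜᵀ η^(1/m)/(η^(1/m) + I_q)^(m+1) dq → 0` as `η → 0⁺`. -/
theorem stmt_12 (m t T : ℝ) (hm : 0 < m) (htT : t < T)
    (I : ℝ → ℝ) (hI_cont : ContinuousOn I (Icc t T))
    (hI_pos : ∀ q ∈ Ico t T, 0 < I q)
    (hI_int : IntegrableOn (fun q => I q ^ (-m)) (Ioo t T)) :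
    Tendsto (fun η : ℝ => ∫ q in Ioo t T, η ^ (1 / m) / (η ^ (1 / m) + I q) ^ (m + 1))
      (nhdsWithin 0 (Ioi 0)) (nhds 0) :=
  stmt_12_general m t T hm I hI_pos hI_int
end

section
/- Fix T > 0 and c > 0, and let h : [0, T) → ℝ be continuous with h_u ≥ c/(T−u) for all u ∈ [0, T). Then: (i) for every t ∈ [0, T), exp(−∫ₜˢ h_u du) → 0 as s → T⁻; and (ii) ∫₀ˢ exp(−∫_qˢ h_u du) dq → 0 as s → T⁻. -/
open Real MeasureTheory Set Filter

/-- Key exponential bound: for `0 ≤ t ≤ s < T`,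
`exp(-∫ₜˢ h) ≤ ((T-s)/(T-t))^c`. -/
lemma stmt_14_keyA (T c : ℝ) (hc : 0 < c)
    (h : ℝ → ℝ) (hcont : ContinuousOn h (Ico 0 T))
    (hlb : ∀ u ∈ Ico (0 : ℝ) T, c / (T - u) ≤ h u)
    {t s : ℝ} (ht0 : 0 ≤ t) (hts : t ≤ s) (hsT : s < T) :
    Real.exp (-∫ u in t..s, h u) ≤ ((T - s) / (T - t)) ^ c := by
  have hsub : Icc t s ⊆ Ico 0 T := fun u hu => ⟨ht0.trans hu.1, lt_of_le_of_lt hu.2 hsT⟩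
  have hTt : 0 < T - t := sub_pos.2 (lt_of_le_of_lt hts hsT)
  have hTs : 0 < T - s := sub_pos.2 hsT
  have hInth : IntervalIntegrable h volume t s :=
    (hcont.mono hsub).intervalIntegrable_of_Icc hts
  have hIntl : IntervalIntegrable (fun u => c / (T - u)) volume t s := by
    apply ContinuousOn.intervalIntegrable_of_Icc hts
    apply continuousOn_const.div (continuousOn_const.sub continuousOn_id)
    intro u hu
    exact sub_ne_zero.2 (ne_of_gt (lt_of_le_of_lt hu.2 hsT))
  have hmono : (∫ u in t..s, c / (T - u)) ≤ ∫ u in t..s, h u :=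
    intervalIntegral.integral_mono_on hts hIntl hInth fun u hu => hlb u (hsub hu)
  have hcomp : (∫ u in t..s, c / (T - u)) = c * Real.log ((T - t) / (T - s)) := by
    have h1 : (∫ u in t..s, c / (T - u)) = c * ∫ u in t..s, (T - u)⁻¹ := by
      simp_rw [div_eq_mul_inv]
      exact intervalIntegral.integral_const_mul c _
    have h2 : (∫ u in t..s, (T - u)⁻¹) = ∫ x in T - s..T - t, x⁻¹ :=
      intervalIntegral.integral_comp_sub_left (fun x => x⁻¹) T
    have h3 : (∫ x in T - s..T - t, x⁻¹) = Real.log ((T - t) / (T - s)) := by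
      apply integral_inv
      intro hmem
      rcases hmem with ⟨h4, _⟩
      have : 0 < min (T - s) (T - t) := lt_min hTs hTt
      linarith
    rw [h1, h2, h3]
  have hlog : c * Real.log ((T - t) / (T - s)) ≤ ∫ u in t..s, h u := hcomp ▸ hmono
  calc Real.exp (-∫ u in t..s, h u)
      ≤ Real.exp (-(c * Real.log ((T - t) / (T - s)))) := by
        exact Real.exp_le_exp.2 (neg_le_neg hlog)
    _ = ((T - s) / (T - t)) ^ c := by
        rw [Real.rpow_def_of_pos (div_pos hTs hTt)]
        congr 1
        rw [Real.log_div hTs.ne' hTt.ne', Real.log_div hTt.ne' hTs.ne']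
        ring

/-- The bound tends to `0` as `s → T⁻`. -/
lemma stmt_14_keyB (T c : ℝ) (hc : 0 < c) {t : ℝ} (htT : t < T) :
    Tendsto (fun s => ((T - s) / (T - t)) ^ c) (nhdsWithin T (Iio T)) (nhds 0) := by
  have h1 : Tendsto (fun s : ℝ => (T - s) / (T - t)) (nhdsWithin T (Iio T)) (nhds 0) := by
    have : Tendsto (fun s : ℝ => (T - s) / (T - t)) (nhds T) (nhds ((T - T) / (T - t))) := by
      apply Tendsto.div_const
      exact (tendsto_const_nhds.sub tendsto_id)
    rw [sub_self, zero_div] at this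
    exact this.mono_left nhdsWithin_le_nhds
  have h2 : ContinuousAt (fun x : ℝ => x ^ c) 0 :=
    Real.continuousAt_rpow_const 0 c (Or.inr hc.le)
  have := h2.tendsto.comp h1
  rwa [Real.zero_rpow hc.ne'] at this

/-- For a continuous reversion rate `h` on `[0,T)` with the blow-up lower bound
`h_u ≥ c/(T−u)`: (i) `exp(−∫ₜˢ h) → 0` as `s → T⁻` for every `t ∈ [0,T)`; and
(ii) `∫₀ˢ exp(−∫_qˢ h) dq → 0` as `s → T⁻`. -/
theorem stmt_14 (T c : ℝ) (hT : 0 < T) (hc : 0 < c)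
    (h : ℝ → ℝ) (hcont : ContinuousOn h (Ico 0 T))
    (hlb : ∀ u ∈ Ico (0 : ℝ) T, c / (T - u) ≤ h u) :
    (∀ t ∈ Ico (0 : ℝ) T,
      Tendsto (fun s => Real.exp (-∫ u in t..s, h u)) (nhdsWithin T (Iio T)) (nhds 0)) ∧
    Tendsto (fun s => ∫ q in (0 : ℝ)..s, Real.exp (-∫ u in q..s, h u))
      (nhdsWithin T (Iio T)) (nhds 0) := by
  have hpos : ∀ u ∈ Ico (0 : ℝ) T, 0 ≤ h u := fun u hu =>
    le_trans (div_pos hc (sub_pos.2 hu.2)).le (hlb u hu)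
  -- generic pointwise bound for the inner exponential in the key range
  have hkey : ∀ {t s : ℝ}, 0 ≤ t → t ≤ s → s < T →
      Real.exp (-∫ u in t..s, h u) ≤ ((T - s) / (T - t)) ^ c :=
    fun ht0 hts hsT => stmt_14_keyA T c hc h hcont hlb ht0 hts hsT
  constructor
  · -- part (i)
    intro t ht
    apply squeeze_zero'
    · exact Filter.Eventually.of_forall fun s => (Real.exp_pos _).le
    · have hev : ∀ᶠ s in nhdsWithin T (Iio T), t < s ∧ s < T := by
        filter_upwards [eventually_nhdsWithin_of_eventually_nhds
          (eventually_gt_nhds ht.2), self_mem_nhdsWithin] with s h1 h2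
        exact ⟨h1, h2⟩
      filter_upwards [hev] with s ⟨h1, h2⟩
      exact hkey ht.1 h1.le h2
    · exact stmt_14_keyB T c hc ht.2
  · -- part (ii)
    set F := fun s => ∫ q in (0 : ℝ)..s, Real.exp (-∫ u in q..s, h u) with hF
    -- integrability data
    have hIntOn : ∀ s : ℝ, 0 ≤ s → s < T → IntegrableOn h (Icc 0 s) volume := by
      intro s hs0 hsT
      apply ContinuousOn.integrableOn_Icc
      exact hcont.mono fun u hu => ⟨hu.1, lt_of_le_of_lt hu.2 hsT⟩
    have hgcont : ∀ s : ℝ, 0 ≤ s → s < T →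
        ContinuousOn (fun q => Real.exp (-∫ u in q..s, h u)) (Icc 0 s) := by
      intro s hs0 hsT
      have h1 : ContinuousOn (fun q => ∫ u in q..s, h u) (Icc 0 s) := by
        have := intervalIntegral.continuousOn_primitive_interval_left
          (f := h) (a := 0) (b := s) (μ := volume)
          (by rw [uIcc_of_le hs0]; exact hIntOn s hs0 hsT)
        rwa [uIcc_of_le hs0] at this
      exact Real.continuous_exp.comp_continuousOn h1.neg
    -- split bound: for 0 ≤ m ≤ s < T,  F s ≤ m * ((T-s)/(T-m))^c + (s - m)
    have hsplit : ∀ m s : ℝ, 0 ≤ m → m ≤ s → s < T →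
        F s ≤ m * ((T - s) / (T - m)) ^ c + (s - m) := by
      intro m s hm0 hms hsT
      have hs0 : 0 ≤ s := hm0.trans hms
      have hgc := hgcont s hs0 hsT
      have hg1 : IntervalIntegrable (fun q => Real.exp (-∫ u in q..s, h u)) volume 0 m :=
        (hgc.mono (Icc_subset_Icc le_rfl hms)).intervalIntegrable_of_Icc hm0
      have hg2 : IntervalIntegrable (fun q => Real.exp (-∫ u in q..s, h u)) volume m s :=
        (hgc.mono (Icc_subset_Icc hm0 le_rfl)).intervalIntegrable_of_Icc hms
      have hadd : F s = (∫ q in (0:ℝ)..m, Real.exp (-∫ u in q..s, h u))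
          + ∫ q in m..s, Real.exp (-∫ u in q..s, h u) :=
        (intervalIntegral.integral_add_adjacent_intervals hg1 hg2).symm
      -- bound the first integral
      have hhint : ∀ a b : ℝ, 0 ≤ a → a ≤ b → b ≤ s → IntervalIntegrable h volume a b := by
        intro a b ha hab hbs
        exact ((hIntOn s hs0 hsT).mono
          (by rw [uIcc_of_le hab]; exact Icc_subset_Icc ha hbs) le_rfl).intervalIntegrable
      have hb1 : (∫ q in (0:ℝ)..m, Real.exp (-∫ u in q..s, h u))
          ≤ m * ((T - s) / (T - m)) ^ c := by
        have hmonopt : ∀ q ∈ Icc (0:ℝ) m,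
            Real.exp (-∫ u in q..s, h u) ≤ ((T - s) / (T - m)) ^ c := by
          intro q hq
          have hsum : (∫ u in q..s, h u)
              = (∫ u in q..m, h u) + ∫ u in m..s, h u :=
            (intervalIntegral.integral_add_adjacent_intervals
              (hhint q m hq.1 hq.2 hms) (hhint m s hm0 hms le_rfl)).symm
          have hnn : 0 ≤ ∫ u in q..m, h u := by
            apply intervalIntegral.integral_nonneg hq.2
            intro u hu
            exact hpos u ⟨hq.1.trans hu.1, lt_of_le_of_lt (hu.2.trans hms) hsT⟩
          calc Real.exp (-∫ u in q..s, h u)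
              ≤ Real.exp (-∫ u in m..s, h u) := by
                rw [hsum]; exact Real.exp_le_exp.2 (by linarith)
            _ ≤ ((T - s) / (T - m)) ^ c := hkey hm0 hms hsT
        calc (∫ q in (0:ℝ)..m, Real.exp (-∫ u in q..s, h u))
            ≤ ∫ _ in (0:ℝ)..m, ((T - s) / (T - m)) ^ c :=
              intervalIntegral.integral_mono_on hm0 hg1 intervalIntegrable_const hmonopt
          _ = m * ((T - s) / (T - m)) ^ c := by
              rw [intervalIntegral.integral_const, smul_eq_mul, sub_zero]
      -- bound the second integral
      have hb2 : (∫ q in m..s, Real.exp (-∫ u in q..s, h u)) ≤ s - m := by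
        have hle1 : ∀ q ∈ Icc m s, Real.exp (-∫ u in q..s, h u) ≤ 1 := by
          intro q hq
          rw [Real.exp_le_one_iff, neg_nonpos]
          apply intervalIntegral.integral_nonneg hq.2
          intro u hu
          exact hpos u ⟨hm0.trans (hq.1.trans hu.1), lt_of_le_of_lt hu.2 hsT⟩
        calc (∫ q in m..s, Real.exp (-∫ u in q..s, h u))
            ≤ ∫ _ in m..s, (1 : ℝ) :=
              intervalIntegral.integral_mono_on hms hg2 intervalIntegrable_const hle1
          _ = s - m := by rw [intervalIntegral.integral_const, smul_eq_mul, mul_one]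
      rw [hadd]
      linarith
    -- F is nonneg (for s ≥ 0)
    have hFnn : ∀ s : ℝ, 0 ≤ s → 0 ≤ F s := by
      intro s hs0
      apply intervalIntegral.integral_nonneg hs0
      intro q _
      exact (Real.exp_pos _).le
    rw [tendsto_order]
    constructor
    · intro a ha
      filter_upwards [eventually_nhdsWithin_of_eventually_nhds
        (eventually_gt_nhds hT)] with s hs
      exact lt_of_lt_of_le ha (hFnn s hs.le)
    · intro ε hε
      set m : ℝ := max 0 (T - ε / 2) with hm
      have hm0 : 0 ≤ m := le_max_left _ _
      have hmT : m < T := max_lt hT (by linarith)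
      have hTm : T - m ≤ ε / 2 := by
        rcases max_cases 0 (T - ε / 2) with ⟨he, hle⟩ | ⟨he, hlt⟩
        · rw [hm, he]; linarith
        · rw [hm, he]; linarith
      have htendB : Tendsto (fun s => m * ((T - s) / (T - m)) ^ c)
          (nhdsWithin T (Iio T)) (nhds 0) := by
        have := (stmt_14_keyB T c hc hmT).const_mul m
        rwa [mul_zero] at this
      have hev1 : ∀ᶠ s in nhdsWithin T (Iio T), m * ((T - s) / (T - m)) ^ c < ε / 2 :=
        htendB.eventually_lt_const (by linarith)
      have hev2 : ∀ᶠ s in nhdsWithin T (Iio T), m < s ∧ s < T := by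
        filter_upwards [eventually_nhdsWithin_of_eventually_nhds
          (eventually_gt_nhds hmT), self_mem_nhdsWithin] with s h1 h2
        exact ⟨h1, h2⟩
      filter_upwards [hev1, hev2] with s hs1 ⟨hs2, hs3⟩
      have := hsplit m s hm0 hs2.le hs3
      have : F s ≤ m * ((T - s) / (T - m)) ^ c + (s - m) := this
      have hsm : s - m ≤ T - m := by linarith
      linarith
end

section
/- Fix ε > 0 and real numbers a₀, a₁. Define h_t = (1+ε)/((ε+t)(1−t)) and a_t = a₀ + a₁(1−t) for t ∈ (0, 1), and define M(t) = a₀ · ((1−t)/(ε+t)) · ((1+ε)·ln(1/(1−t)) − t) + a₁ · ((1−t)/(ε+t)) · (t²/2 + εt). Then M is differentiable on (0, 1) with M′(t) = a_t − h_t · M(t) for all t ∈ (0, 1), and M(t) → 0 as t → 0⁺ and M(t) → 0 as t → 1⁻. -/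
open Real MeasureTheory Set Filter

/-!
`(1 - t)/(ε + t)` is an integrating factor for the mean ODE: its logarithmic derivative is
`-(1 + ε)/((ε + t)(1 - t)) = -h_t`. Hence `M` is that factor times a primitive of
`a_t · (ε + t)/(1 - t)`, and the ODE is the product rule. Writing `(1 - t) log (1/(1 - t))` as
`-(1 - t) log (1 - t)` shows that `M` is continuous away from `t = -ε`, also at `t = 1`, so both
boundary limits are the values `M 0 = M 1 = 0`.
-/

noncomputable def integratingFactor (ε t : ℝ) : ℝ := (1 - t) / (ε + t)

noncomputable def meanPotential (ε a₀ a₁ t : ℝ) : ℝ :=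
  a₀ * ((1 + ε) * log (1 / (1 - t)) - t) + a₁ * (t ^ 2 / 2 + ε * t)

section
variable {ε t : ℝ}

theorem hasDerivAt_integratingFactor (ht : t ≠ 1) (hεt : ε + t ≠ 0) :
    HasDerivAt (integratingFactor ε)
      (-((1 + ε) / ((ε + t) * (1 - t))) * integratingFactor ε t) t := by
  have h1t : 1 - t ≠ 0 := sub_ne_zero.mpr ht.symm
  refine ((hasDerivAt_id t).const_sub 1 |>.div ((hasDerivAt_id t).const_add ε) hεt).congr_deriv ?_
  simp only [integratingFactor, id]
  field_simp
  ring

theorem hasDerivAt_meanPotential (a₀ a₁ : ℝ) (ht : t ≠ 1) :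
    HasDerivAt (meanPotential ε a₀ a₁) ((ε + t) / (1 - t) * (a₀ + a₁ * (1 - t))) t := by
  have h1t : 1 - t ≠ 0 := sub_ne_zero.mpr ht.symm
  have hlog : HasDerivAt (fun s => log (1 / (1 - s))) (1 / (1 - t)) t := by
    simp only [one_div, log_inv]
    exact (((hasDerivAt_id t).const_sub 1).log h1t).neg.congr_deriv (by simp [neg_div])
  refine ((((hlog.const_mul (1 + ε)).sub (hasDerivAt_id t)).const_mul a₀).add
    ((((hasDerivAt_pow 2 t).div_const 2).add ((hasDerivAt_id t).const_mul ε)).const_mul a₁))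
    |>.congr_deriv ?_
  field_simp
  ring

theorem integratingFactor_mul_meanPotential (a₀ a₁ : ℝ) :
    integratingFactor ε t * meanPotential ε a₀ a₁ t =
      (a₀ * ((1 + ε) * -((1 - t) * log (1 - t)) - t * (1 - t))
        + a₁ * ((1 - t) * (t ^ 2 / 2 + ε * t))) / (ε + t) := by
  rw [integratingFactor, meanPotential, one_div, log_inv]
  ring

theorem continuousAt_integratingFactor_mul_meanPotential (a₀ a₁ : ℝ) (hεt : ε + t ≠ 0) :
    ContinuousAt (fun s => integratingFactor ε s * meanPotential ε a₀ a₁ s) t := by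
  simp only [integratingFactor_mul_meanPotential]
  have : Continuous fun s : ℝ => (1 - s) * log (1 - s) :=
    continuous_mul_log.comp (continuous_const.sub continuous_id)
  exact ContinuousAt.div (by fun_prop) (by fun_prop) hεt

end

/-- The closed-form mean `M` of the diffusion bridge with reversion rate
`h_t = (1+ε)/((ε+t)(1−t))` and source `a_t = a₀ + a₁(1−t)` solves the mean ODE
`M′ = a_t − h_t·M` on `(0,1)` and satisfies `M(t) → 0` as `t → 0⁺` and as `t → 1⁻`. -/
theorem stmt_17 (ε a₀ a₁ : ℝ) (hε : 0 < ε)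
    (h : ℝ → ℝ) (hh : ∀ t : ℝ, h t = (1 + ε) / ((ε + t) * (1 - t)))
    (a : ℝ → ℝ) (ha : ∀ t : ℝ, a t = a₀ + a₁ * (1 - t))
    (M : ℝ → ℝ)
    (hM : ∀ t : ℝ, M t =
      a₀ * ((1 - t) / (ε + t)) * ((1 + ε) * Real.log (1 / (1 - t)) - t)
        + a₁ * ((1 - t) / (ε + t)) * (t ^ 2 / 2 + ε * t)) :
    (∀ t ∈ Ioo (0 : ℝ) 1, HasDerivAt M (a t - h t * M t) t) ∧
      Tendsto M (nhdsWithin 0 (Ioi 0)) (nhds 0) ∧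
      Tendsto M (nhdsWithin 1 (Iio 1)) (nhds 0) := by
  have hMeq : M = fun t => integratingFactor ε t * meanPotential ε a₀ a₁ t := by
    funext t
    rw [hM, integratingFactor, meanPotential]
    ring
  have hlimit : ∀ t₀, ε + t₀ ≠ 0 → M t₀ = 0 → ∀ s, Tendsto M (nhdsWithin t₀ s) (nhds 0) :=
    fun t₀ hεt h₀ s => h₀ ▸ hMeq ▸
      (continuousAt_integratingFactor_mul_meanPotential a₀ a₁ hεt).tendsto.mono_left
        nhdsWithin_le_nhds
  refine ⟨fun t ⟨ht₀, ht₁⟩ => ?_, hlimit 0 (by simpa using hε.ne') (by simp [hM]) _,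
    hlimit 1 (by linarith) (by simp [hM]) _⟩
  have hεt : ε + t ≠ 0 := by positivity
  rw [hMeq]
  refine ((hasDerivAt_integratingFactor ht₁.ne hεt).mul
    (hasDerivAt_meanPotential a₀ a₁ ht₁.ne)).congr_deriv ?_
  have h1t : 1 - t ≠ 0 := by linarith
  simp only [ha, hh, integratingFactor]
  field_simp
  ring
end

section
/- Fix T > 0, m > 0, a > 0, η > 0 and σ ∈ ℝ, and let w : [0, T] → ℝ be continuous and strictly positive on [0, T) with ∫₀ᵀ w_s^(1/m) ds < ∞. Define A_{η,t} = (η^(1/m) + (1/(m+1)) ∫ₜᵀ w_s^(1/m) ds)^(−m) and C_{η,t} = a ∫ₜᵀ A_{η,s} ds, and set φ(t, x) = A_{η,t}·x + C_{η,t}. Then φ(T, x) = x/η for all x ≥ 0, and for all t ∈ (0, T) and x ≥ 0, ∂φ/∂t (t,x) + a·∂φ/∂x (t,x) + x · inf_{v ≥ 0} { −v·∂φ/∂x (t,x) + (σ²/2)·v·∂²φ/∂x² (t,x) + (1/w_t)·v^(m+1)/(m+1) } = 0. -/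
open Real MeasureTheory Set Filter

/-!
Since `φ` is affine in `x`, `∂²φ/∂x² = 0` and the infimum is the explicit minimum of
`v ↦ -v·A + v^(m+1)/((m+1)w)`, attained at `v = (A w)^(1/m)` and equal to
`-(m/(m+1)) w^(1/m) A^((m+1)/m)`. The HJB equation therefore reduces to `C' = -a A`, which holds
by construction, and to the Bernoulli equation `A' = (m/(m+1)) w^(1/m) A^((m+1)/m)`, which the
substitution `A = B^(-m)` turns into the linear equation `B' = -w^(1/m)/(m+1)` solved by the
defining formula.
-/

theorem isLeast_neg_mul_add_rpow_div {m b c : ℝ} (hm : 0 < m) (hb : 0 < b) (hc : 0 < c) :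
    IsLeast {z : ℝ | ∃ v : ℝ, 0 ≤ v ∧ z = -v * b + c * v ^ (m + 1) / (m + 1)}
      (-(m / (m + 1)) * b ^ ((m + 1) / m) * c ^ (-(1 / m))) := by
  set v₀ := (b / c) ^ (1 / m) with hv₀_def
  have hv₀ : 0 < v₀ := by positivity
  have hcv₀ : c * v₀ ^ (m + 1) = b * v₀ := by
    rw [rpow_add hv₀, rpow_one, ← rpow_mul (div_pos hb hc).le, one_div_mul_cancel hm.ne',
      rpow_one]
    field_simp
  have hbv₀ : b * v₀ = b ^ ((m + 1) / m) * c ^ (-(1 / m)) := by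
    rw [hv₀_def, div_rpow hb.le hc.le, rpow_neg hc.le, add_div, div_self hm.ne', rpow_add hb,
      rpow_one]
    ring
  rw [mul_assoc, ← hbv₀]
  refine ⟨⟨v₀, hv₀.le, ?_⟩, ?_⟩
  · rw [hcv₀]
    field_simp
    ring
  · rintro _ ⟨v, hv, rfl⟩
    -- Bernoulli's inequality for `u = v / v₀`, scaled by `b v₀ / (m + 1)`.
    set u := v / v₀
    have hu : 0 ≤ u := div_nonneg hv hv₀.le
    have hv_eq : v = u * v₀ := (div_mul_cancel₀ v hv₀.ne').symm
    have bernoulli : 1 + (m + 1) * (u - 1) ≤ u ^ (m + 1) := by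
      simpa using one_add_mul_self_le_rpow_one_add (s := u - 1) (by linarith) (p := m + 1)
        (by linarith)
    have hcv : c * v ^ (m + 1) = b * v₀ * u ^ (m + 1) := by
      rw [hv_eq, mul_rpow hu hv₀.le, ← hcv₀]
      ring
    have hm1 : 0 < m + 1 := by linarith
    rw [hcv, hv_eq, ← sub_nonneg]
    refine (div_nonneg (mul_nonneg (mul_nonneg hb.le hv₀.le) (sub_nonneg.2 bernoulli))
      hm1.le).trans_eq ?_
    field_simp
    ring

theorem setIntegral_Ioo_eq_intervalIntegral {f : ℝ → ℝ} {u b : ℝ} (hub : u ≤ b) :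
    ∫ s in Ioo u b, f s = ∫ s in u..b, f s := by
  rw [intervalIntegral.integral_of_le hub, integral_Ioc_eq_integral_Ioo]

theorem continuousOn_setIntegral_Ioo_left {f : ℝ → ℝ} {a b : ℝ} (hf : ContinuousOn f (Icc a b)) :
    ContinuousOn (fun u => ∫ s in Ioo u b, f s) (Icc a b) := by
  rcases le_or_gt a b with hab | hab
  · have := intervalIntegral.continuousOn_primitive_interval_left (μ := volume)
      (uIcc_of_le hab ▸ hf.integrableOn_Icc)
    rw [uIcc_of_le hab] at this
    exact this.congr fun u hu => setIntegral_Ioo_eq_intervalIntegral hu.2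
  · simp [Icc_eq_empty_of_lt hab]

theorem hasDerivAt_setIntegral_Ioo_left {f : ℝ → ℝ} {a b t : ℝ} (hf : ContinuousOn f (Icc a b))
    (ht : t ∈ Ioo a b) :
    HasDerivAt (fun u => ∫ s in Ioo u b, f s) (-f t) t := by
  have hfi : IntervalIntegrable f volume t b :=
    (hf.mono (Icc_subset_Icc_left ht.1.le)).intervalIntegrable_of_Icc ht.2.le
  have hft : ContinuousAt f t := hf.continuousAt (Icc_mem_nhds ht.1 ht.2)
  have hmeas : StronglyMeasurableAtFilter f (nhds t) :=
    (hf.mono Ioo_subset_Icc_self).stronglyMeasurableAtFilter isOpen_Ioo t ht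
  refine (intervalIntegral.integral_hasDerivAt_left hfi hmeas hft).congr_of_eventuallyEq ?_
  filter_upwards [Iio_mem_nhds ht.2] with u hu using setIntegral_Ioo_eq_intervalIntegral hu.le

/-- The function `B` with `A_{η,t} = B_t ^ (-m)`. -/
noncomputable def slopeBase (T m η : ℝ) (w : ℝ → ℝ) (t : ℝ) : ℝ :=
  η ^ (1 / m) + (1 / (m + 1)) * ∫ s in Ioo t T, w s ^ (1 / m)

section slopeBase

variable {T m η t : ℝ} {w : ℝ → ℝ}

theorem slopeBase_pos (hm : 0 < m) (hη : 0 < η) (hw : ∀ s ∈ Ioo 0 T, 0 ≤ w s) (ht : 0 ≤ t) :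
    0 < slopeBase T m η w t :=
  add_pos_of_pos_of_nonneg (by positivity) <| mul_nonneg (by positivity) <|
    setIntegral_nonneg measurableSet_Ioo fun s hs =>
      rpow_nonneg (hw s ⟨ht.trans_lt hs.1, hs.2⟩) _

theorem continuousOn_slopeBase (hm : 0 < m) (hw : ContinuousOn w (Icc 0 T)) :
    ContinuousOn (slopeBase T m η w) (Icc 0 T) :=
  continuousOn_const.add <| continuousOn_const.mul <|
    continuousOn_setIntegral_Ioo_left (hw.rpow_const fun _ _ => Or.inr (by positivity))

theorem hasDerivAt_slopeBase (hm : 0 < m) (hw : ContinuousOn w (Icc 0 T)) (ht : t ∈ Ioo 0 T) :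
    HasDerivAt (slopeBase T m η w) (1 / (m + 1) * -w t ^ (1 / m)) t :=
  ((hasDerivAt_setIntegral_Ioo_left
    (hw.rpow_const fun _ _ => Or.inr (by positivity)) ht).const_mul _).const_add _

theorem continuousOn_slopeBase_rpow_neg (hm : 0 < m) (hη : 0 < η)
    (hw_cont : ContinuousOn w (Icc 0 T)) (hw_nonneg : ∀ s ∈ Ioo 0 T, 0 ≤ w s) :
    ContinuousOn (fun u => slopeBase T m η w u ^ (-m)) (Icc 0 T) :=
  (continuousOn_slopeBase hm hw_cont).rpow_const fun _ hu =>
    Or.inl (slopeBase_pos hm hη hw_nonneg hu.1).ne'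

theorem hasDerivAt_slopeBase_rpow_neg (hm : 0 < m) (hη : 0 < η)
    (hw_cont : ContinuousOn w (Icc 0 T)) (hw_nonneg : ∀ s ∈ Ioo 0 T, 0 ≤ w s) (ht : t ∈ Ioo 0 T) :
    HasDerivAt (fun u => slopeBase T m η w u ^ (-m))
      (m / (m + 1) * w t ^ (1 / m) * (slopeBase T m η w t ^ (-m)) ^ ((m + 1) / m)) t := by
  have hpos := slopeBase_pos hm hη hw_nonneg ht.1.le
  convert (hasDerivAt_slopeBase hm hw_cont ht).rpow_const (p := -m) (Or.inl hpos.ne') using 1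
  rw [← rpow_mul hpos.le, show -m * ((m + 1) / m) = -m - 1 by field_simp; ring]
  ring

end slopeBase

theorem stmt_18_general (T m a η σ : ℝ) (hm : 0 < m) (hη : 0 < η)
    (w : ℝ → ℝ) (hw_cont : ContinuousOn w (Icc 0 T))
    (hw_pos : ∀ t ∈ Ico (0 : ℝ) T, 0 < w t)
    (A C : ℝ → ℝ)
    (hA : ∀ t : ℝ, A t =
      (η ^ (1 / m) + (1 / (m + 1)) * ∫ s in Ioo t T, w s ^ (1 / m)) ^ (-m))
    (hC : ∀ t : ℝ, C t = a * ∫ s in Ioo t T, A s)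
    (φ : ℝ → ℝ → ℝ) (hφ : ∀ t x : ℝ, φ t x = A t * x + C t) :
    (∀ x : ℝ, 0 ≤ x → φ T x = x / η) ∧
      ∀ t ∈ Ioo (0 : ℝ) T, ∀ x : ℝ, 0 ≤ x →
        deriv (fun τ => φ τ x) t + a * deriv (fun y => φ t y) x
          + x * sInf {z : ℝ | ∃ v : ℝ, 0 ≤ v ∧
              z = -v * deriv (fun y => φ t y) x
                + σ ^ 2 / 2 * v * deriv (deriv (fun y => φ t y)) x
                + (1 / w t) * v ^ (m + 1) / (m + 1)} = 0 := by
  have hw_nonneg : ∀ s ∈ Ioo 0 T, 0 ≤ w s := fun s hs => (hw_pos s (Ioo_subset_Ico_self hs)).le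
  have hA_eq : ∀ u, A u = slopeBase T m η w u ^ (-m) := hA
  have hA' : A = fun u => slopeBase T m η w u ^ (-m) := funext hA_eq
  refine ⟨fun x _ => ?_, fun t ht x _ => ?_⟩
  · simp only [hφ, hA, hC, Ioo_self, setIntegral_empty, mul_zero, add_zero]
    rw [← rpow_mul hη.le, show 1 / m * -m = -1 by field_simp, rpow_neg_one]
    ring
  have hA_deriv := hasDerivAt_slopeBase_rpow_neg hm hη hw_cont hw_nonneg ht
  have hC_deriv : HasDerivAt C (a * -A t) t := by
    rw [funext hC]
    exact (hasDerivAt_setIntegral_Ioo_left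
      (hA' ▸ continuousOn_slopeBase_rpow_neg hm hη hw_cont hw_nonneg) ht).const_mul a
  rw [← hA', ← hA_eq t] at hA_deriv
  have hφ_t : HasDerivAt (fun τ => φ τ x)
      (m / (m + 1) * w t ^ (1 / m) * A t ^ ((m + 1) / m) * x + a * -A t) t := by
    simp only [hφ]
    exact (hA_deriv.mul_const x).add hC_deriv
  have hφ_x : deriv (fun y => φ t y) = fun _ => A t := by
    simp only [hφ]
    funext y
    simp
  have hwt : 0 < w t := hw_pos t (Ioo_subset_Ico_self ht)
  have hAt : 0 < A t := hA_eq t ▸ rpow_pos_of_pos (slopeBase_pos hm hη hw_nonneg ht.1.le) _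
  have hw_inv : (1 / w t) ^ (-(1 / m)) = w t ^ (1 / m) := by
    rw [one_div, inv_rpow hwt.le, rpow_neg hwt.le, inv_inv]
  rw [hφ_t.deriv, hφ_x, deriv_const']
  simp only [mul_zero, add_zero]
  rw [(isLeast_neg_mul_add_rpow_div hm hAt (one_div_pos.2 hwt)).csInf_eq, hw_inv]
  ring

/-- The affine function `φ(t,x) = A_{η,t}x + C_{η,t}`, with
`A_{η,t} = (η^(1/m) + (1/(m+1))∫ₜᵀ w_s^(1/m) ds)^(−m)` and `C_{η,t} = a∫ₜᵀ A_{η,s} ds`,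
satisfies the terminal condition `φ(T,x) = x/η` and is an explicit classical solution of
the Hamilton–Jacobi–Bellman equation
`∂φ/∂t + a·∂φ/∂x + x·inf_{v ≥ 0}{−v·∂φ/∂x + (σ²/2)v·∂²φ/∂x² + (1/w_t)v^(m+1)/(m+1)} = 0`
on `(0,T) × [0,∞)`. -/
theorem stmt_18 (T m a η σ : ℝ) (hT : 0 < T) (hm : 0 < m) (ha : 0 < a) (hη : 0 < η)
    (w : ℝ → ℝ) (hw_cont : ContinuousOn w (Icc 0 T))
    (hw_pos : ∀ t ∈ Ico (0 : ℝ) T, 0 < w t)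
    (hw_int : IntegrableOn (fun s => w s ^ (1 / m)) (Ioo 0 T))
    (A C : ℝ → ℝ)
    (hA : ∀ t : ℝ, A t =
      (η ^ (1 / m) + (1 / (m + 1)) * ∫ s in Ioo t T, w s ^ (1 / m)) ^ (-m))
    (hC : ∀ t : ℝ, C t = a * ∫ s in Ioo t T, A s)
    (φ : ℝ → ℝ → ℝ) (hφ : ∀ t x : ℝ, φ t x = A t * x + C t) :
    (∀ x : ℝ, 0 ≤ x → φ T x = x / η) ∧
      ∀ t ∈ Ioo (0 : ℝ) T, ∀ x : ℝ, 0 ≤ x →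
        deriv (fun τ => φ τ x) t + a * deriv (fun y => φ t y) x
          + x * sInf {z : ℝ | ∃ v : ℝ, 0 ≤ v ∧
              z = -v * deriv (fun y => φ t y) x
                + σ ^ 2 / 2 * v * deriv (deriv (fun y => φ t y)) x
                + (1 / w t) * v ^ (m + 1) / (m + 1)} = 0 :=
  stmt_18_general T m a η σ hm hη w hw_cont hw_pos A C hA hC φ hφ
end
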